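/- arXiv:2102.10149 — 2 statements merged into one kernel-verified Lean document; each statement's English description precedes it below -/
import Mathlib

section
/- Let δ be an expansion function on L, let p ∈ L be a proper element and b ∈ L, and let n and k be integers with 2 ≤ k ≤ n. Suppose b is k-potent δ-primary to p. Then b is φ_n-δ-primary to p if and only if b is δ-primary to p. -/
/-- A multiplicative lattice: a complete lattice with a commutative, associative
multiplication that distributes over arbitrary joins and whose greatest element `1`
is a multiplicative identity.  We also bundle the standing assumptions of the paper:
`L` is compactly generated, `1` is compact, and products of compact elements are
compact. -/
class MultiplicativeLattice (L : Type*) extends CompleteLattice L, CommMonoid L where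
  mul_sSup : ∀ (a : L) (s : Set L), a * sSup s = ⨆ x ∈ s, a * x
  one_eq_top : (1 : L) = ⊤
  compactly_generated : ∀ x : L, ∃ s : Set L,
    (∀ y ∈ s, IsCompactElement y) ∧ sSup s = x
  compact_one : IsCompactElement (1 : L)
  compact_mul : ∀ a b : L, IsCompactElement a →
    IsCompactElement b → IsCompactElement (a * b)

variable {L : Type*}

/-- An expansion function on `L`. -/
def IsExpansion [CompleteLattice L] (δ : L → L) : Prop :=
  (∀ a, a ≤ δ a) ∧ ∀ a b : L, a ≤ b → δ a ≤ δ b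

/-- A reduction function on `L`. -/
def IsReduction [CompleteLattice L] (φ : L → L) : Prop :=
  ∀ a, φ a ≤ a

/-- `b` is `φ`-`δ`-primary to `p`. -/
def PhiDeltaPrimaryTo [MultiplicativeLattice L] (φ δ : L → L) (b p : L) : Prop :=
  ∀ x : L, x * b ≤ p → ¬ x * b ≤ φ p → x ≤ δ p

/-- `b` is `δ`-primary to `p`. -/
def DeltaPrimaryTo [MultiplicativeLattice L] (δ : L → L) (b p : L) : Prop :=
  ∀ x : L, x * b ≤ p → x ≤ δ p

/-- `b` is `φ`-prime to `p`. -/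
def PhiPrimeTo [MultiplicativeLattice L] (φ : L → L) (b p : L) : Prop :=
  ∀ x : L, x * b ≤ p → ¬ x * b ≤ φ p → x ≤ p

/-- The radical `√q`: the join of all compact elements some positive power of which
lies below `q`.  This is the expansion function `δ₁`. -/
def mlRadical [MultiplicativeLattice L] (q : L) : L :=
  sSup {x : L | IsCompactElement x ∧ ∃ n : ℕ, 0 < n ∧ x ^ n ≤ q}

/-- The function `φ_ω(q) = ⋀_{n ≥ 1} qⁿ`. -/
def phiOmega [MultiplicativeLattice L] (q : L) : L := ⨅ n : ℕ, q ^ (n + 1)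

/-- The mlResidual `(a : c)`, the join of all `x` with `x * c ≤ a`. -/
def mlResidual [MultiplicativeLattice L] (a c : L) : L := sSup {x : L | x * c ≤ a}
namespace MultiplicativeLattice

variable [MultiplicativeLattice L]

theorem mul_le_mul_of_le_right {a b : L} (h : a ≤ b) (c : L) : c * a ≤ c * b := by
  have hb : b = sSup {a, b} := by simp [h]
  calc c * a ≤ ⨆ x ∈ ({a, b} : Set L), c * x := le_biSup (c * ·) (Set.mem_insert a {b})
    _ = c * b := by rw [← mul_sSup, ← hb]

instance isOrderedMonoid : IsOrderedMonoid L :=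
  .mk (fun a b h c => by simpa only [mul_comm _ c] using mul_le_mul_of_le_right h c)
    (fun _ _ h c => mul_le_mul_of_le_right h c)

theorem le_one (a : L) : a ≤ 1 := one_eq_top (L := L) ▸ le_top

theorem pow_le_pow_of_le {k n : ℕ} (a : L) (h : k ≤ n) : a ^ n ≤ a ^ k :=
  pow_le_pow_right_of_le_one' (le_one a) h

end MultiplicativeLattice

section Primary

variable [MultiplicativeLattice L] {δ : L → L} {b p : L}

theorem DeltaPrimaryTo.phiDeltaPrimaryTo (h : DeltaPrimaryTo δ b p) (φ : L → L) :
    PhiDeltaPrimaryTo φ δ b p :=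
  fun x hx _ => h x hx

theorem PhiDeltaPrimaryTo.deltaPrimaryTo {φ : L → L} (h : PhiDeltaPrimaryTo φ δ b p)
    (hφ : ∀ x : L, x * b ≤ φ p → x ≤ δ p) : DeltaPrimaryTo δ b p := by
  intro x hx
  by_cases hxφ : x * b ≤ φ p
  · exact hφ x hxφ
  · exact h x hx hxφ

end Primary

theorem phiN_deltaPrimary_iff_deltaPrimary_of_kPotent_general [MultiplicativeLattice L]
    (δ : L → L) (p : L) (b : L)
    (n k : ℕ) (hkn : k ≤ n)
    (hkpotent : ∀ x : L, x * b ≤ p ^ k → x ≤ δ p) :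
    PhiDeltaPrimaryTo (fun q => q ^ n) δ b p ↔ DeltaPrimaryTo δ b p :=
  ⟨fun h => h.deltaPrimaryTo fun x hx =>
      hkpotent x (hx.trans (MultiplicativeLattice.pow_le_pow_of_le p hkn)),
    fun h => h.phiDeltaPrimaryTo _⟩

theorem phiN_deltaPrimary_iff_deltaPrimary_of_kPotent [MultiplicativeLattice L]
    (δ : L → L) (hδ : IsExpansion δ) (p : L) (hp : p < 1) (b : L)
    (n k : ℕ) (hk : 2 ≤ k) (hkn : k ≤ n)
    (hkpotent : ∀ x : L, x * b ≤ p ^ k → x ≤ δ p) :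
    PhiDeltaPrimaryTo (fun q => q ^ n) δ b p ↔ DeltaPrimaryTo δ b p :=
  phiN_deltaPrimary_iff_deltaPrimary_of_kPotent_general δ p b n k hkn hkpotent
end

section
/- Let δ be an expansion function on L, let p ∈ L be a proper element and b ∈ L. If b is weakly δ-primary to p (that is, φ₀-δ-primary to p) but b is not δ-primary to p, then p·b = 0. -/
variable {L : Type*}

/-!
If some `x` with `x * b ≤ p` escaped `δ p`, weak primariness would force `x * b = 0`; but then
`(x ⊔ p) * b = p * b`, so as soon as `p * b ≠ 0` weak primariness applies to `x ⊔ p` and puts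
`x ≤ x ⊔ p` below `δ p` after all.
-/

namespace MultiplicativeLattice

variable [MultiplicativeLattice L]

theorem mul_sup (a x y : L) : a * (x ⊔ y) = a * x ⊔ a * y := by
  simpa only [sSup_pair, iSup_pair] using mul_sSup a {x, y}

theorem sup_mul (x y a : L) : (x ⊔ y) * a = x * a ⊔ y * a := by
  simp only [mul_comm _ a, MultiplicativeLattice.mul_sup]

theorem mul_le_left (a b : L) : a * b ≤ a :=
  calc a * b ≤ a * b ⊔ a * 1 := le_sup_left
    _ = a := by rw [← MultiplicativeLattice.mul_sup, one_eq_top, sup_top_eq, ← one_eq_top, mul_one]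

theorem sup_mul_eq_of_mul_eq_bot {x b : L} (hx : x * b = ⊥) (y : L) : (x ⊔ y) * b = y * b := by
  rw [MultiplicativeLattice.sup_mul, hx, bot_sup_eq]

end MultiplicativeLattice

theorem deltaPrimaryTo_of_weakly_of_mul_ne_bot [MultiplicativeLattice L] {δ : L → L} {b p : L}
    (h : PhiDeltaPrimaryTo (fun _ => (⊥ : L)) δ b p) (hpb : p * b ≠ ⊥) :
    DeltaPrimaryTo δ b p := by
  intro x hx
  by_cases hxb : x * b = ⊥
  · have hsup := MultiplicativeLattice.sup_mul_eq_of_mul_eq_bot hxb p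
    have hle : (x ⊔ p) * b ≤ p := hsup ▸ MultiplicativeLattice.mul_le_left p b
    exact le_sup_left.trans (h (x ⊔ p) hle (by rwa [hsup, le_bot_iff]))
  · exact h x hx (by rwa [le_bot_iff])

theorem mul_eq_bot_of_weakly_deltaPrimary_not_deltaPrimary_general [MultiplicativeLattice L]
    (δ : L → L) (p : L) (b : L)
    (h : PhiDeltaPrimaryTo (fun _ => (⊥ : L)) δ b p)
    (hnot : ¬ DeltaPrimaryTo δ b p) :
    p * b = ⊥ :=
  not_not.mp fun hpb => hnot (deltaPrimaryTo_of_weakly_of_mul_ne_bot h hpb)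

theorem mul_eq_bot_of_weakly_deltaPrimary_not_deltaPrimary [MultiplicativeLattice L]
    (δ : L → L) (hδ : IsExpansion δ) (p : L) (hp : p < 1) (b : L)
    (h : PhiDeltaPrimaryTo (fun _ => (⊥ : L)) δ b p)
    (hnot : ¬ DeltaPrimaryTo δ b p) :
    p * b = ⊥ :=
  mul_eq_bot_of_weakly_deltaPrimary_not_deltaPrimary_general δ p b h hnot
end
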